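/- The Yorioka ideal I_id (for the identity function id on ω) is contained in HDZ: every A ∈ I_id has Hausdorff dimension 0. -/

import Mathlib

/-!
If `A ⊆ [σ]_∞` with `ht σ = g ≫ id`, then `n ≤ |σ n|` for almost all `n`, so for every `N` the
cylinders `[σ n]`, `n ≥ N`, cover `A` with diameters at most `2⁻ⁿ`. For `d > 0` their
`d`-dimensional sums are tails of a convergent geometric series, hence `μH[d] A = 0`
(Hausdorff–Cantelli), and `dimH A = 0`.
-/

open Set Filter Metric MeasureTheory
open scoped ENNReal NNReal Topology

/-- The Cantor space `2^ω = ℕ → Bool` carries the metric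
`d(x,y) = 2^{-min{n : x n ≠ y n}}` (and `d(x,x) = 0`). -/
noncomputable local instance cantorMetric : MetricSpace (ℕ → Bool) := PiNat.metricSpace

/-- `s` is an initial segment of `x : 2^ω`. -/
def InitSeg (s : List Bool) (x : ℕ → Bool) : Prop :=
  ∀ i : ℕ, (hi : i < s.length) → s.get ⟨i, hi⟩ = x i

/-- `[σ]_∞` : the set of `x ∈ 2^ω` having `σ n` as an initial segment for infinitely
many `n`. -/
def limsupCyl (σ : ℕ → List Bool) : Set (ℕ → Bool) :=
  {x | ∃ᶠ n in Filter.atTop, InitSeg (σ n) x}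

/-- The ideal `J_g = {A ⊆ 2^ω : ∃ σ, ht σ = g and A ⊆ [σ]_∞}`. -/
def Jg (g : ℕ → ℕ) : Set (Set (ℕ → Bool)) :=
  {A | ∃ σ : ℕ → List Bool, (∀ n, (σ n).length = g n) ∧ A ⊆ limsupCyl σ}

/-- `f ≪ g` iff for every `k`, `f (n^k) ≤ g n` for all but finitely many `n`. -/
def FastBelow (f g : ℕ → ℕ) : Prop := ∀ k : ℕ, ∀ᶠ n in Filter.atTop, f (n ^ k) ≤ g n

/-- The Yorioka ideal `I_f = ⋃_{g ≫ f} J_g`. -/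
def Yorioka (f : ℕ → ℕ) : Set (Set (ℕ → Bool)) :=
  {A | ∃ g : ℕ → ℕ, FastBelow f g ∧ A ∈ Jg g}

section HausdorffCantelli

variable {X : Type*} [EMetricSpace X] [MeasurableSpace X] [BorelSpace X]
  {s : Set X} {t : ℕ → Set X}

theorem hausdorffMeasure_eq_zero_of_subset_frequently_mem {d : ℝ}
    (hdiam : Tendsto (fun n ↦ ediam (t n)) atTop (𝓝 0))
    (hsum : ∑' n, ediam (t n) ^ d ≠ ∞) (hs : s ⊆ {x | ∃ᶠ n in atTop, x ∈ t n}) :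
    μH[d] s = 0 := by
  have htail : Tendsto (fun N ↦ ⨆ i, ediam (t (i + N))) atTop (𝓝 0) := by
    refine ENNReal.tendsto_nhds_zero.2 fun ε hε ↦ ?_
    obtain ⟨N₀, hN₀⟩ := eventually_atTop.1 (ENNReal.tendsto_nhds_zero.1 hdiam ε hε)
    exact eventually_atTop.2 ⟨N₀, fun N hN ↦ iSup_le fun i ↦ hN₀ _ (by omega)⟩
  have hcover : ∀ N, s ⊆ ⋃ i, t (i + N) := fun N x hx ↦ by
    obtain ⟨n, hn, hNn⟩ := ((hs hx).and_eventually (eventually_ge_atTop N)).exists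
    exact mem_iUnion.2 ⟨n - N, by rwa [Nat.sub_add_cancel hNn]⟩
  refine le_antisymm ?_ zero_le
  calc μH[d] s ≤ liminf (fun N ↦ ∑' i, ediam (t (i + N)) ^ d) atTop :=
        Measure.hausdorffMeasure_le_liminf_tsum d s _ htail (fun N i ↦ t (i + N))
          (.of_forall fun N i ↦ le_iSup (fun i ↦ ediam (t (i + N))) i) (.of_forall hcover)
    _ = 0 := (ENNReal.tendsto_sum_nat_add _ hsum).liminf_eq

theorem dimH_eq_zero_of_subset_frequently_mem {c : ℝ≥0∞} (hc : c < 1)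
    (hdiam : ∀ᶠ n in atTop, ediam (t n) ≤ c ^ n) (hs : s ⊆ {x | ∃ᶠ n in atTop, x ∈ t n}) :
    dimH s = 0 := by
  obtain ⟨N, hN⟩ := eventually_atTop.1 hdiam
  have hdiam' : ∀ n, ediam (t (n + N)) ≤ c ^ n := fun n ↦
    (hN _ (by omega)).trans (pow_le_pow_of_le_one zero_le hc.le (by omega))
  have hs' : s ⊆ {x | ∃ᶠ n in atTop, x ∈ t (n + N)} := fun x hx ↦ by
    have hx : ∃ᶠ n in atTop, x ∈ t n := hs hx
    rw [← map_add_atTop_eq_nat N] at hx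
    exact frequently_map.1 hx
  refine nonpos_iff_eq_zero.1 (ENNReal.le_of_forall_pos_le_add fun d hd _ ↦ ?_)
  rw [zero_add]
  refine dimH_le_of_hausdorffMeasure_ne_top (ne_of_eq_of_ne ?_ ENNReal.zero_ne_top)
  have hcd : c ^ (d : ℝ) < 1 := ENNReal.rpow_lt_one hc (by exact_mod_cast hd)
  refine hausdorffMeasure_eq_zero_of_subset_frequently_mem ?_ ?_ hs'
  · exact tendsto_of_tendsto_of_tendsto_of_le_of_le tendsto_const_nhds
      (ENNReal.tendsto_pow_atTop_nhds_zero_of_lt_one hc) (fun _ ↦ zero_le) hdiam'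
  · refine ne_top_of_le_ne_top ((ENNReal.tsum_geometric _).trans_ne
      (ENNReal.inv_ne_top.2 (tsub_pos_of_lt hcd).ne'))
      (ENNReal.tsum_le_tsum fun n ↦ ?_)
    calc ediam (t (n + N)) ^ (d : ℝ) ≤ (c ^ n) ^ (d : ℝ) :=
          ENNReal.rpow_le_rpow (hdiam' n) d.2
      _ = (c ^ (d : ℝ)) ^ n := by
          rw [← ENNReal.rpow_natCast, ← ENNReal.rpow_natCast, ← ENNReal.rpow_mul,
            ← ENNReal.rpow_mul, mul_comm]

end HausdorffCantelli

theorem ediam_setOf_initSeg_le (s : List Bool) :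
    ediam {x : ℕ → Bool | InitSeg s x} ≤ 2⁻¹ ^ s.length := by
  refine ediam_le fun x hx y hy ↦ ?_
  have hxy : dist x y ≤ (1 / 2 : ℝ) ^ s.length :=
    PiNat.mem_cylinder_iff_dist_le.1 fun i hi ↦ (hx i hi).symm.trans (hy i hi)
  rw [edist_dist, ← ENNReal.ofReal_ofNat 2, ← ENNReal.ofReal_inv_of_pos two_pos,
    ← ENNReal.ofReal_pow (by norm_num), ← one_div]
  exact ENNReal.ofReal_le_ofReal hxy

theorem dimH_eq_zero_of_mem_Jg {g : ℕ → ℕ} (hg : ∀ᶠ n in atTop, n ≤ g n) {A : Set (ℕ → Bool)}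
    (hA : A ∈ Jg g) : dimH A = 0 := by
  obtain ⟨σ, hlen, hA⟩ := hA
  refine dimH_eq_zero_of_subset_frequently_mem (t := fun n ↦ {x | InitSeg (σ n) x})
    (ENNReal.inv_lt_one.2 ENNReal.one_lt_two) ?_ hA
  filter_upwards [hg] with n hn
  refine (ediam_setOf_initSeg_le _).trans (pow_le_pow_of_le_one zero_le ?_ ?_)
  · exact ENNReal.inv_le_one.2 one_le_two
  · rwa [hlen]

/-- The Yorioka ideal `I_id` is contained in `HDZ`: every
`A ∈ I_id` has Hausdorff dimension `0`. -/
theorem stmt14 : ∀ A ∈ Yorioka id, dimH A = 0 := by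
  rintro A ⟨g, hg, hA⟩
  exact dimH_eq_zero_of_mem_Jg (by simpa using hg 1) hA
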